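/- Let κ > 0 and define φ : ℝ → ℝ by φ(x) = 1/2 − (1/π) arctan(e^{κx}). Then: (i) there exists λ₀ > 0 such that for all x ∈ ℝ, λ₀ e^{−κ|x|} < −φ′(x) < (1/λ₀) e^{−κ|x|}; (ii) for all x ∈ ℝ, |φ‴(x)| ≤ −κ² φ′(x); (iii) there exists λ₁ > 0 such that for all x ≥ 0, λ₁ e^{−κx} ≤ φ(x). -/

import Mathlib

/-!
With `ψ t = 1/2 - arctan (exp t) / π` we have `φ x = ψ (κ x)`, and `-ψ' = 1 / (2π cosh)` because
`eᵗ / (1 + e²ᵗ) = 1 / (2 cosh t)`. Since `exp |t| / 2 < cosh t ≤ exp |t|`, this gives (i).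
Differentiating twice more gives `ψ''' = (2 - cosh²) / (2π cosh³)`, and `|2 - cosh²| ≤ cosh²` because
`cosh ≥ 1`, which is (ii). For (iii), `ψ t = arctan (exp (-t)) / π` and `arctan z ≥ z / 2` on `[0, 1]`.
-/

open Real

namespace Real

theorem cosh_le_exp_abs (t : ℝ) : cosh t ≤ exp |t| := by
  rw [← cosh_abs, cosh_eq]
  linarith [exp_le_exp.2 (neg_le_self (abs_nonneg t))]

theorem exp_abs_lt_two_mul_cosh (t : ℝ) : exp |t| < 2 * cosh t := by
  rw [← cosh_abs, cosh_eq]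
  linarith [exp_pos (-|t|)]

theorem div_two_le_arctan {z : ℝ} (hz₀ : 0 ≤ z) (hz₁ : z ≤ 1) : z / 2 ≤ arctan z := by
  have hsqrt : √(1 + z ^ 2) ≤ 2 := sqrt_le_iff.2 ⟨zero_le_two, by nlinarith⟩
  calc z / 2 ≤ z / √(1 + z ^ 2) := div_le_div_of_nonneg_left hz₀ (by positivity) hsqrt
    _ = sin (arctan z) := (sin_arctan z).symm
    _ ≤ arctan z := sin_le (arctan_nonneg.2 hz₀)

end Real

namespace Cutoff

noncomputable def profile (t : ℝ) : ℝ := 1 / 2 - (1 / π) * arctan (exp t)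

theorem contDiff_profile {n : ℕ∞} : ContDiff ℝ n profile :=
  contDiff_const.sub (contDiff_const.mul contDiff_exp.arctan)

theorem profile_eq_arctan_exp_neg (t : ℝ) : profile t = arctan (exp (-t)) / π := by
  rw [profile, exp_neg, arctan_inv_of_pos (exp_pos t)]
  field_simp

theorem hasDerivAt_arctan_exp (t : ℝ) :
    HasDerivAt (fun t => arctan (exp t)) (2 * cosh t)⁻¹ t := by
  convert (hasDerivAt_exp t).arctan using 1
  rw [cosh_eq, exp_neg]
  field_simp
  ring

theorem deriv_profile : deriv profile = fun t => -(cosh t)⁻¹ / (2 * π) := by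
  funext t
  refine (((hasDerivAt_arctan_exp t).const_mul (1 / π)).const_sub (1 / 2)).deriv.trans ?_
  field_simp

theorem deriv_deriv_profile :
    deriv (deriv profile) = fun t => sinh t / cosh t ^ 2 / (2 * π) := by
  rw [deriv_profile]
  funext t
  refine (((hasDerivAt_cosh t).inv (cosh_pos t).ne').neg.div_const (2 * π)).deriv.trans ?_
  ring

theorem iteratedDeriv_three_profile (t : ℝ) :
    iteratedDeriv 3 profile t = (2 - cosh t ^ 2) / cosh t ^ 3 / (2 * π) := by
  rw [iteratedDeriv_succ, iteratedDeriv_succ, iteratedDeriv_one, deriv_deriv_profile]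
  refine (((hasDerivAt_sinh t).div ((hasDerivAt_cosh t).pow 2)
    (pow_ne_zero 2 (cosh_pos t).ne')).div_const (2 * π)).deriv.trans ?_
  have hc := (cosh_pos t).ne'
  simp only [Pi.pow_apply]
  field_simp
  linear_combination 2 * cosh t * cosh_sq t

theorem exp_neg_abs_div_le_neg_deriv_profile (t : ℝ) :
    exp (-|t|) / (2 * π) ≤ -deriv profile t := by
  simp only [deriv_profile, neg_div, neg_neg, exp_neg]
  gcongr
  exact cosh_le_exp_abs t

theorem neg_deriv_profile_lt_exp_neg_abs_div (t : ℝ) :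
    -deriv profile t < exp (-|t|) / π := by
  simp only [deriv_profile, neg_div, neg_neg, exp_neg]
  rw [show (cosh t)⁻¹ / (2 * π) = (2 * cosh t)⁻¹ / π by ring]
  gcongr
  exact exp_abs_lt_two_mul_cosh t

theorem abs_iteratedDeriv_three_profile_le (t : ℝ) :
    |iteratedDeriv 3 profile t| ≤ -deriv profile t := by
  have hc : 1 ≤ cosh t := one_le_cosh t
  have hnum : |2 - cosh t ^ 2| ≤ cosh t ^ 2 := abs_le.2 ⟨by linarith, by nlinarith⟩
  simp only [iteratedDeriv_three_profile, deriv_profile, neg_div, neg_neg]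
  rw [abs_div, abs_div, abs_of_pos (by positivity : 0 < 2 * π),
    abs_of_pos (by positivity : 0 < cosh t ^ 3)]
  gcongr
  calc |2 - cosh t ^ 2| / cosh t ^ 3 ≤ cosh t ^ 2 / cosh t ^ 3 := by gcongr
    _ = (cosh t)⁻¹ := by field_simp

theorem exp_neg_div_le_profile {t : ℝ} (ht : 0 ≤ t) : exp (-t) / (2 * π) ≤ profile t := by
  rw [profile_eq_arctan_exp_neg, ← div_div]
  gcongr
  exact div_two_le_arctan (exp_pos _).le (exp_le_one_iff.2 (neg_nonpos.2 ht))

theorem exists_bounds_neg_deriv_profile_comp_mul {κ : ℝ} (hκ : 0 < κ) :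
    ∃ lam₀ > 0, ∀ x : ℝ, lam₀ * exp (-κ * |x|) < κ * -deriv profile (κ * x) ∧
      κ * -deriv profile (κ * x) < 1 / lam₀ * exp (-κ * |x|) := by
  have hexp (x : ℝ) : exp (-κ * |x|) = exp (-|κ * x|) := by
    rw [abs_mul, abs_of_pos hκ, neg_mul]
  refine ⟨min (κ / (4 * π)) (π / κ), by positivity, fun x => ⟨?_, ?_⟩⟩
  · calc min (κ / (4 * π)) (π / κ) * exp (-κ * |x|) ≤ κ / (4 * π) * exp (-|κ * x|) := by
          rw [hexp]; gcongr; exact min_le_left _ _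
      _ = κ * (exp (-|κ * x|) / (2 * π)) / 2 := by ring
      _ < κ * (exp (-|κ * x|) / (2 * π)) := half_lt_self (by positivity)
      _ ≤ κ * -deriv profile (κ * x) := by
          gcongr; exact exp_neg_abs_div_le_neg_deriv_profile _
  · calc κ * -deriv profile (κ * x) < κ * (exp (-|κ * x|) / π) := by
          gcongr; exact neg_deriv_profile_lt_exp_neg_abs_div _
      _ = 1 / (π / κ) * exp (-κ * |x|) := by rw [hexp, one_div_div]; ring
      _ ≤ 1 / min (κ / (4 * π)) (π / κ) * exp (-κ * |x|) := by
          gcongr; exact min_le_right _ _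

end Cutoff

open Cutoff in
theorem cutoff_properties
    (κ : ℝ) (hκ : 0 < κ) (φ : ℝ → ℝ)
    (hφ : ∀ x : ℝ, φ x = 1 / 2 - (1 / Real.pi) * Real.arctan (Real.exp (κ * x))) :
    (∃ lam₀ > 0, ∀ x : ℝ,
        lam₀ * Real.exp (-κ * |x|) < -deriv φ x ∧
        -deriv φ x < (1 / lam₀) * Real.exp (-κ * |x|)) ∧
    (∀ x : ℝ, |iteratedDeriv 3 φ x| ≤ -(κ ^ 2) * deriv φ x) ∧
    (∃ lam₁ > 0, ∀ x ≥ (0:ℝ), lam₁ * Real.exp (-κ * x) ≤ φ x) := by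
  have hφ_eq : φ = fun x => profile (κ * x) := funext hφ
  have hderiv (x : ℝ) : deriv φ x = κ * deriv profile (κ * x) := by
    rw [hφ_eq, deriv_comp_mul_left, smul_eq_mul]
  have hiter (x : ℝ) : iteratedDeriv 3 φ x = κ ^ 3 * iteratedDeriv 3 profile (κ * x) := by
    rw [hφ_eq, iteratedDeriv_comp_const_mul contDiff_profile]
  refine ⟨?_, fun x => ?_, ⟨1 / (2 * π), by positivity, fun x hx => ?_⟩⟩
  · obtain ⟨lam₀, hlam₀, hbounds⟩ := exists_bounds_neg_deriv_profile_comp_mul hκ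
    exact ⟨lam₀, hlam₀, fun x => by simpa only [hderiv, mul_neg] using hbounds x⟩
  · rw [hiter, hderiv, abs_mul, abs_of_pos (by positivity)]
    calc κ ^ 3 * |iteratedDeriv 3 profile (κ * x)| ≤ κ ^ 3 * -deriv profile (κ * x) := by
          gcongr; exact abs_iteratedDeriv_three_profile_le _
      _ = -κ ^ 2 * (κ * deriv profile (κ * x)) := by ring
  · rw [hφ, one_div_mul_eq_div, neg_mul]
    exact exp_neg_div_le_profile (by positivity)
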